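/- Let E₀, E₁, E₂, E₃ be finite-dimensional complex inner product spaces, φ₁ : E₁ → E₀, φ₂ : E₂ → E₁, φ₃ : E₃ → E₂ linear maps, w ∈ ℂ, and s ∈ {1, −1}. Define η : E₂ × E₁ → E₁ × E₀ by η(ξ₁, ξ₂) = (φ₂ ξ₁ + s·w·ξ₂, φ₁ ξ₂) and η' : E₃ × E₂ → E₂ × E₁ by η'(ξ₁, ξ₂) = (φ₃ ξ₁ − s·w·ξ₂, φ₂ ξ₂), where the direct sums carry the product inner products and † denotes Hermitian adjoint. Then the endomorphism η† ∘ η + η' ∘ η'† of E₂ × E₁ is block diagonal; explicitly, for all (ξ₁, ξ₂) ∈ E₂ × E₁, (η† ∘ η + η' ∘ η'†)(ξ₁, ξ₂) = ((φ₂† φ₂ + φ₃ φ₃† + |w|²·id)(ξ₁), (φ₂ φ₂† + φ₁† φ₁ + |w|²·id)(ξ₂)). In particular the off-diagonal blocks cancel. -/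

import Mathlib

/-!
The adjoint of `η = koszulTensorDiff φ φ' s w` is `(η₁, η₀) ↦ (φ'† η₁, conj (s w) η₁ + φ† η₀)`.
Expanding `η† η` and `η' η'†`, their off-diagonal blocks are `s w φ₂†` and `conj (s w) φ₂`
with opposite signs, since `η'` carries `-s` in place of `s`; on the diagonal the scalar
`|s w|²` equals `|w|²` because `|s| = 1`.
-/

noncomputable section

variable {E₀ E₁ E₂ E₃ : Type*}
  [NormedAddCommGroup E₀] [InnerProductSpace ℂ E₀] [FiniteDimensional ℂ E₀]
  [NormedAddCommGroup E₁] [InnerProductSpace ℂ E₁] [FiniteDimensional ℂ E₁]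
  [NormedAddCommGroup E₂] [InnerProductSpace ℂ E₂] [FiniteDimensional ℂ E₂]
  [NormedAddCommGroup E₃] [InnerProductSpace ℂ E₃] [FiniteDimensional ℂ E₃]

/-- The differential `(ξ₁, ξ₂) ↦ (φ' ξ₁ + s·w·ξ₂, φ ξ₂)` of the tensor product of a complex
with the Koszul complex of a single function `w`, regarded as a map between the orthogonal
(`L²`) direct sums. -/
def koszulTensorDiff (φ : E₁ →ₗ[ℂ] E₀) (φ' : E₂ →ₗ[ℂ] E₁) (s w : ℂ) :
    WithLp 2 (E₂ × E₁) →ₗ[ℂ] WithLp 2 (E₁ × E₀) :=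
  (WithLp.linearEquiv 2 ℂ (E₁ × E₀)).symm.toLinearMap ∘ₗ
    LinearMap.prod (φ' ∘ₗ LinearMap.fst ℂ E₂ E₁ + (s * w) • LinearMap.snd ℂ E₂ E₁)
      (φ ∘ₗ LinearMap.snd ℂ E₂ E₁) ∘ₗ
    (WithLp.linearEquiv 2 ℂ (E₂ × E₁)).toLinearMap

open LinearMap ComplexConjugate WithLp

theorem adjoint_koszulTensorDiff_apply (φ : E₁ →ₗ[ℂ] E₀) (φ' : E₂ →ₗ[ℂ] E₁) (s w : ℂ)
    (η₁ : E₁) (η₀ : E₀) :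
    adjoint (koszulTensorDiff φ φ' s w) (toLp 2 (η₁, η₀)) =
      toLp 2 (adjoint φ' η₁, conj (s * w) • η₁ + adjoint φ η₀) := by
  refine ext_inner_right ℂ fun ξ => ?_
  obtain ⟨ξ₁, ξ₂⟩ := ξ
  rw [adjoint_inner_left]
  change inner ℂ (toLp 2 (η₁, η₀)) (toLp 2 (φ' ξ₁ + (s * w) • ξ₂, φ ξ₂)) = _
  simp only [prod_inner_apply, inner_add_left, inner_add_right, inner_smul_left,
    inner_smul_right, adjoint_inner_left, Complex.conj_conj]
  ring

theorem adjoint_koszulTensorDiff_comp_self_apply (φ : E₁ →ₗ[ℂ] E₀) (φ' : E₂ →ₗ[ℂ] E₁)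
    (s w : ℂ) (ξ₁ : E₂) (ξ₂ : E₁) :
    (adjoint (koszulTensorDiff φ φ' s w) ∘ₗ koszulTensorDiff φ φ' s w) (toLp 2 (ξ₁, ξ₂)) =
      toLp 2 (adjoint φ' (φ' ξ₁) + (s * w) • adjoint φ' ξ₂,
        conj (s * w) • φ' ξ₁ + ((‖s * w‖ : ℂ) ^ 2) • ξ₂ + adjoint φ (φ ξ₂)) := by
  rw [comp_apply, show koszulTensorDiff φ φ' s w (toLp 2 (ξ₁, ξ₂)) =
    toLp 2 (φ' ξ₁ + (s * w) • ξ₂, φ ξ₂) from rfl, adjoint_koszulTensorDiff_apply,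
    map_add, map_smul, smul_add, smul_smul, Complex.conj_mul']

theorem koszulTensorDiff_comp_adjoint_apply (φ : E₁ →ₗ[ℂ] E₀) (φ' : E₂ →ₗ[ℂ] E₁)
    (s w : ℂ) (η₁ : E₁) (η₀ : E₀) :
    (koszulTensorDiff φ φ' s w ∘ₗ adjoint (koszulTensorDiff φ φ' s w)) (toLp 2 (η₁, η₀)) =
      toLp 2 (φ' (adjoint φ' η₁) + ((‖s * w‖ : ℂ) ^ 2) • η₁ + (s * w) • adjoint φ η₀,
        conj (s * w) • φ η₁ + φ (adjoint φ η₀)) := by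
  rw [comp_apply, adjoint_koszulTensorDiff_apply]
  change toLp 2 (φ' (adjoint φ' η₁) + (s * w) • (conj (s * w) • η₁ + adjoint φ η₀),
    φ (conj (s * w) • η₁ + adjoint φ η₀)) = _
  rw [map_add, map_smul, smul_add, smul_smul, Complex.mul_conj', add_assoc]

/-- For `η(ξ₁, ξ₂) = (φ₂ ξ₁ + s·w·ξ₂, φ₁ ξ₂)` and `η'(ξ₁, ξ₂) = (φ₃ ξ₁ - s·w·ξ₂, φ₂ ξ₂)`, the
endomorphism `η† ∘ η + η' ∘ η'†` of `E₂ × E₁` is block diagonal, with diagonal blocks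
`φ₂† φ₂ + φ₃ φ₃† + |w|² id` and `φ₂ φ₂† + φ₁† φ₁ + |w|² id`. -/
theorem koszul_tensor_block_diagonal
    (φ₁ : E₁ →ₗ[ℂ] E₀) (φ₂ : E₂ →ₗ[ℂ] E₁) (φ₃ : E₃ →ₗ[ℂ] E₂)
    (w : ℂ) (s : ℂ) (hs : s = 1 ∨ s = -1) :
    ∀ (ξ₁ : E₂) (ξ₂ : E₁),
      (LinearMap.adjoint (koszulTensorDiff φ₁ φ₂ s w) ∘ₗ koszulTensorDiff φ₁ φ₂ s w +
        koszulTensorDiff φ₂ φ₃ (-s) w ∘ₗ LinearMap.adjoint (koszulTensorDiff φ₂ φ₃ (-s) w))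
        ((WithLp.linearEquiv 2 ℂ (E₂ × E₁)).symm (ξ₁, ξ₂)) =
      (WithLp.linearEquiv 2 ℂ (E₂ × E₁)).symm
        (((LinearMap.adjoint φ₂ ∘ₗ φ₂ + φ₃ ∘ₗ LinearMap.adjoint φ₃ +
            ((‖w‖ : ℂ) ^ 2) • LinearMap.id : E₂ →ₗ[ℂ] E₂)) ξ₁,
         ((φ₂ ∘ₗ LinearMap.adjoint φ₂ + LinearMap.adjoint φ₁ ∘ₗ φ₁ +
            ((‖w‖ : ℂ) ^ 2) • LinearMap.id : E₁ →ₗ[ℂ] E₁)) ξ₂) := by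
  intro ξ₁ ξ₂
  have hsw : ‖s * w‖ = ‖w‖ := by rcases hs with rfl | rfl <;> simp
  have hsw' : ‖-s * w‖ = ‖w‖ := by rw [neg_mul, norm_neg, hsw]
  rw [coe_symm_linearEquiv, LinearMap.add_apply, adjoint_koszulTensorDiff_comp_self_apply,
    koszulTensorDiff_comp_adjoint_apply, hsw, hsw', ← toLp_add, Prod.mk_add_mk]
  congr 2
  all_goals
    simp only [LinearMap.add_apply, comp_apply, LinearMap.smul_apply, id_apply, neg_mul, map_neg]
    module

end
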